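/- arXiv:2010.06956 — 2 statements merged into one kernel-verified Lean document; each statement's English description precedes it below -/
import Mathlib

section
/- Let g_1 = R² − Σ_{i=1}^n X_i² with R > 0 and let y = (y_w)_{w ∈ W_{2d̂}} be a sequence of reals with y_1 = 1 such that the localizing matrices M_{t−1}(g_1 y) are positive semidefinite for 1 ≤ t ≤ d̂. Then for each such t one has the identity Tr(M_{t−1}(g_1 y)) = R² Tr(M_{t−1}(y)) + 1 − Tr(M_t(y)), hence Tr(M_t(y)) ≤ R² Tr(M_{t−1}(y)) + 1, and consequently Tr(M_{d̂}(y)) ≤ Σ_{t=0}^{d̂} R^{2t}. Moreover, if in addition B_G ∘ M_{d̂}(y) ∈ Π_G(S_+^{r_0}) for a graph G on the node set W_{d̂} (r_0 = |W_{d̂}|), then √(Σ_{w ∈ C} y_w²) ≤ Tr(M_{d̂}(y)) ≤ Σ_{t=0}^{d̂} R^{2t}, where C = supp(G) ∪ W_{d̂}². -/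
open scoped Classical BigOperators RealInnerProductSpace

noncomputable section

/-- Words in `n` noncommuting letters `X_1, …, X_n`. -/
abbrev Word (n : ℕ) := List (Fin n)

/-- The involution `⋆` on words: it fixes the letters pointwise and reverses words. -/
def wstar {n : ℕ} (w : Word n) : Word n := w.reverse

/-- Noncommutative polynomials with real coefficients in `n` noncommuting letters,
represented as finitely supported coefficient functions on words. -/
abbrev NCPoly (n : ℕ) := Word n →₀ ℝ

/-- The involution `⋆` on nc polynomials. -/
def ncStar {n : ℕ} (f : NCPoly n) : NCPoly n :=
  Finsupp.equivMapDomain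
    ⟨wstar, wstar, fun w => List.reverse_reverse w, fun w => List.reverse_reverse w⟩ f

/-- `f ∈ Sym ℝ⟨X⟩`, i.e. `f⋆ = f`. -/
def IsSymNC {n : ℕ} (f : NCPoly n) : Prop := ncStar f = f

/-- The degree of an nc polynomial: the length of the longest word in its support. -/
def ncDeg {n : ℕ} (f : NCPoly n) : ℕ := f.support.sup List.length

/-- `⌈k/2⌉`. -/
def ceilHalf (k : ℕ) : ℕ := (k + 1) / 2

/-- The Riesz functional `L_y` associated with a moment sequence `y`. -/
def Ly {n : ℕ} (y : Word n → ℝ) (f : NCPoly n) : ℝ := f.sum fun w a => a * y w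

/-- Words of length exactly `k`. -/
def wordsLen (n : ℕ) : ℕ → Finset (Word n)
  | 0 => {([] : Word n)}
  | k + 1 => ((Finset.univ : Finset (Fin n)) ×ˢ wordsLen n k).image fun p => p.1 :: p.2

/-- `W_d`: the words of degree at most `d`. -/
def Wd (n d : ℕ) : Finset (Word n) := (Finset.range (d + 1)).biUnion (wordsLen n)

/-- `B² = {u⋆u : u ∈ B}`. -/
def Bsq {n : ℕ} (B : Finset (Word n)) : Set (Word n) := {w | ∃ u ∈ B, w = wstar u ++ u}

/-- The localizing matrix `M(g y)` indexed by the word set `B`,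
with entries `L_y(u⋆ g v)`.  For `g = 1` this is the moment matrix. -/
def locMat {n : ℕ} (B : Finset (Word n)) (g : NCPoly n) (y : Word n → ℝ) :
    Matrix ↥B ↥B ℝ := fun u v => g.sum fun w a => a * y (wstar u.1 ++ w ++ v.1)

/-- The moment matrix `M_B(y)`, with entries `y_{u⋆v}`. -/
def momMat {n : ℕ} (B : Finset (Word n)) (y : Word n → ℝ) : Matrix ↥B ↥B ℝ :=
  fun u v => y (wstar u.1 ++ v.1)

/-- `B_G ∘ M ∈ Π_G(𝕊₊)` : the partial matrix given by the entries of `M` on the diagonal and on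
the edges of `G` admits a positive semidefinite completion. -/
def Completable {n : ℕ} (B : Finset (Word n)) (G : SimpleGraph (Word n))
    (M : Matrix ↥B ↥B ℝ) : Prop :=
  ∃ P : Matrix ↥B ↥B ℝ, P.PosSemidef ∧ ∀ u v : ↥B, (u = v ∨ G.Adj u.1 v.1) → P u v = M u v

/-- `Q ∈ 𝕊_G` : `Q` vanishes on non-edges off the diagonal. -/
def SparsityPattern {n : ℕ} (B : Finset (Word n)) (G : SimpleGraph (Word n))
    (Q : Matrix ↥B ↥B ℝ) : Prop :=
  ∀ u v : ↥B, ¬(u = v ∨ G.Adj u.1 v.1) → Q u v = 0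

/-- The support of a graph with word nodes: `supp(G) = {u⋆v : {u,v} ∈ E(G)}`. -/
def gsupp {n : ℕ} (G : SimpleGraph (Word n)) : Set (Word n) :=
  {w | ∃ u v, G.Adj u v ∧ w = wstar u ++ v}

/-- `supp_g(G) = {u⋆wv : {u,v} ∈ E(G), w ∈ supp(g)}`. -/
def gsuppP {n : ℕ} (g : NCPoly n) (G : SimpleGraph (Word n)) : Set (Word n) :=
  {s | ∃ u v w, G.Adj u v ∧ w ∈ g.support ∧ s = wstar u ++ w ++ v}

/-- A graph has all its edges inside the node set `V`. -/
def EdgesIn {n : ℕ} (V : Finset (Word n)) (G : SimpleGraph (Word n)) : Prop :=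
  ∀ u v, G.Adj u v → u ∈ V ∧ v ∈ V

/-- Cyclic successor on `Fin m`. -/
def cycSucc {m : ℕ} (hm : 0 < m) (i : Fin m) : Fin m := ⟨(i.1 + 1) % m, Nat.mod_lt _ hm⟩

/-- A graph is chordal if every cycle of length at least 4 has a chord. -/
def IsChordal {V : Type*} (G : SimpleGraph V) : Prop :=
  ∀ (m : ℕ) (hm : 4 ≤ m) (c : Fin m → V), Function.Injective c →
    (∀ i, G.Adj (c i) (c (cycSucc (by omega) i))) →
      ∃ i j, G.Adj (c i) (c j) ∧ cycSucc (by omega) i ≠ j ∧ cycSucc (by omega) j ≠ i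

/-- The maximal chordal extension: the chordal extension completing every connected component. -/
def maxCE {n : ℕ} (G : SimpleGraph (Word n)) : SimpleGraph (Word n) where
  Adj u v := u ≠ v ∧ G.Reachable u v
  symm := ⟨fun _ _ h => ⟨h.1.symm, h.2.symm⟩⟩
  loopless := ⟨fun _ h => h.1 rfl⟩

/-- An abstract chordal-extension operation `G ↦ Ḡ` on graphs with nodes inside a finite word
set: it contains the original graph, returns chordal graphs on the same node set, and is
monotone (`G ⊆ H ⟹ Ḡ ⊆ H̄`, also with respect to enlarging the node set). -/
structure ChordalExt (n : ℕ) where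
  ce : Finset (Word n) → SimpleGraph (Word n) → SimpleGraph (Word n)
  le_ce : ∀ V G, G ≤ ce V G
  chordal : ∀ V G, IsChordal (ce V G)
  edges_in : ∀ V G, EdgesIn V G → EdgesIn V (ce V G)
  mono : ∀ V V' G H, V ⊆ V' → G ≤ H → ce V G ≤ ce V' H

/-- Evaluation of an nc polynomial at a tuple of elements of an ℝ-algebra. -/
def evalNC {n : ℕ} {R : Type*} [Ring R] [Algebra ℝ R] (f : NCPoly n) (A : Fin n → R) : R :=
  f.sum fun w a => a • (w.map A).prod

/-- `λ_min(f)`: the smallest eigenvalue that `f` attains on tuples of real symmetric matrices,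
`λ_min(f) = inf{⟨f(A)v, v⟩ : A ∈ (𝕊^r)^n, r ∈ ℕ∖{0}, ‖v‖ = 1}`. -/
def lambdaMin {n : ℕ} (f : NCPoly n) : ℝ :=
  sInf {c | ∃ (r : ℕ) (A : Fin n → Matrix (Fin (r + 1)) (Fin (r + 1)) ℝ)
      (v : Fin (r + 1) → ℝ),
    (∀ i, (A i).IsSymm) ∧ (∑ i, v i ^ 2) = 1 ∧
      c = dotProduct v ((evalNC f A).mulVec v)}

/-- The constant polynomial `1`. -/
def ncOne {n : ℕ} : NCPoly n := Finsupp.single [] 1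

/-! ### Term sparsity for unconstrained eigenvalue optimization -/

/-- The support-extension operation `SE(G)` relative to the monomial basis `B`:
`u ≠ v` are joined whenever `u⋆v ∈ supp(G) ∪ B²`. -/
def SE {n : ℕ} (B : Finset (Word n)) (G : SimpleGraph (Word n)) : SimpleGraph (Word n) :=
  SimpleGraph.fromRel fun u v => u ∈ B ∧ v ∈ B ∧ wstar u ++ v ∈ gsupp G ∪ Bsq B

/-- The term sparsity pattern (tsp) graph `G₀` of `f` with node set `B`:
`u ≠ v` are joined whenever `u⋆v ∈ supp(f) ∪ B²`. -/
def tspU {n : ℕ} (B : Finset (Word n)) (f : NCPoly n) : SimpleGraph (Word n) :=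
  SimpleGraph.fromRel fun u v =>
    u ∈ B ∧ v ∈ B ∧ wstar u ++ v ∈ (↑f.support : Set (Word n)) ∪ Bsq B

/-- The term-sparsity graph sequence `(G_k)`: alternate support extension and
chordal extension starting from the tsp graph. -/
def GseqU {n : ℕ} (E : ChordalExt n) (B : Finset (Word n)) (f : NCPoly n) :
    ℕ → SimpleGraph (Word n)
  | 0 => tspU B f
  | k + 1 => E.ce B (SE B (GseqU E B f k))

/-- The term-sparsity graph sequence built with the maximal chordal extension. -/
def GseqUMax {n : ℕ} (B : Finset (Word n)) (f : NCPoly n) : ℕ → SimpleGraph (Word n)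
  | 0 => tspU B f
  | k + 1 => maxCE (SE B (GseqUMax B f k))

/-- The optimal value `λ_k(f)` of the sparse moment relaxation `(EP^k)` associated
to the graph `G`. -/
def epVal {n : ℕ} (B : Finset (Word n)) (G : SimpleGraph (Word n)) (f : NCPoly n) : ℝ :=
  sInf {r | ∃ y : Word n → ℝ, r = Ly y f ∧ y [] = 1 ∧ Completable B G (momMat B y)}

/-- The optimal value of the dense moment relaxation `(EP)`. -/
def epDenseVal {n : ℕ} (B : Finset (Word n)) (f : NCPoly n) : ℝ :=
  sInf {r | ∃ y : Word n → ℝ, r = Ly y f ∧ y [] = 1 ∧ (momMat B y).PosSemidef}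

/-- `⟨Q, D_w⟩` where `M(g y) = Σ_w D_w y_w`: the coefficient pairing appearing in the dual
SOHS relaxations. -/
def pairingD {n : ℕ} (B : Finset (Word n)) (g : NCPoly n) (Q : Matrix ↥B ↥B ℝ)
    (w : Word n) : ℝ :=
  ∑ u : ↥B, ∑ v : ↥B, (g.sum fun s a => if wstar u.1 ++ s ++ v.1 = w then a else 0) * Q u v

/-- The optimal value of the dual sparse SOHS relaxation `(EP^k)*` associated to `G`. -/
def epDualVal {n : ℕ} (B : Finset (Word n)) (G : SimpleGraph (Word n)) (f : NCPoly n) : ℝ :=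
  sSup {l | ∃ Q : Matrix ↥B ↥B ℝ, Q.PosSemidef ∧ SparsityPattern B G Q ∧
    ∀ w ∈ gsupp G ∪ Bsq B,
      pairingD B ncOne Q w + (if w = ([] : Word n) then l else 0) = f w}

/-- The monomial basis `{1, X_1, …, X_n}`. -/
def quadBasis (n : ℕ) : Finset (Word n) :=
  insert ([] : Word n) ((Finset.univ : Finset (Fin n)).image fun i => ([i] : Word n))

/-! ### Term sparsity for constrained eigenvalue optimization -/

/-- `g_0 = 1, g_1, …, g_m`. -/
def gAug {n m : ℕ} (g : Fin m → NCPoly n) : Fin (m + 1) → NCPoly n :=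
  Fin.cases ncOne g

/-- `d_0 = 0, d_j = ⌈deg(g_j)/2⌉`. -/
def dAug {n m : ℕ} (g : Fin m → NCPoly n) : Fin (m + 1) → ℕ :=
  Fin.cases 0 fun j => ceilHalf (ncDeg (g j))

/-- `d = max{⌈deg f/2⌉, d_1, …, d_m}`: the minimal relaxation order. -/
def minOrder {n m : ℕ} (f : NCPoly n) (g : Fin m → NCPoly n) : ℕ :=
  max (ceilHalf (ncDeg f)) (Finset.univ.sup fun j : Fin m => ceilHalf (ncDeg (g j)))

/-- `A = supp(f) ∪ ⋃_j supp(g_j)`. -/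
def Asupp {n m : ℕ} (f : NCPoly n) (g : Fin m → NCPoly n) : Set (Word n) :=
  (↑f.support : Set (Word n)) ∪ ⋃ j : Fin m, (↑(g j).support : Set (Word n))

/-- The tsp graph `G_d̂^tsp` associated with `f` and `S = {g_1,…,g_m}`:
nodes `W_d̂`, and `u ≠ v` joined whenever `u⋆v ∈ A ∪ W_d̂²`. -/
def tspC {n m : ℕ} (f : NCPoly n) (g : Fin m → NCPoly n) (dh : ℕ) : SimpleGraph (Word n) :=
  SimpleGraph.fromRel fun u v =>
    u ∈ Wd n dh ∧ v ∈ Wd n dh ∧ wstar u ++ v ∈ Asupp f g ∪ Bsq (Wd n dh)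

/-- The term-sparsity graph sequence `(G_{d̂,j}^{(k)})` for constrained eigenvalue
optimization: alternate support extension and chordal extension. -/
def GseqC {n m : ℕ} (E : ChordalExt n) (f : NCPoly n) (g : Fin m → NCPoly n) (dh : ℕ) :
    ℕ → Fin (m + 1) → SimpleGraph (Word n)
  | 0 => Fin.cases (tspC f g dh) fun _ => (⊥ : SimpleGraph (Word n))
  | k + 1 => fun j =>
      E.ce (Wd n (dh - dAug g j)) <| SimpleGraph.fromRel fun u v =>
        u ∈ Wd n (dh - dAug g j) ∧ v ∈ Wd n (dh - dAug g j) ∧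
          ∃ w ∈ (gAug g j).support,
            wstar u ++ w ++ v ∈
              (⋃ j' : Fin (m + 1), gsuppP (gAug g j') (GseqC E f g dh k j')) ∪
                Bsq (Wd n dh)

/-- The same sequence built with the maximal chordal extension. -/
def GseqCMax {n m : ℕ} (f : NCPoly n) (g : Fin m → NCPoly n) (dh : ℕ) :
    ℕ → Fin (m + 1) → SimpleGraph (Word n)
  | 0 => Fin.cases (tspC f g dh) fun _ => (⊥ : SimpleGraph (Word n))
  | k + 1 => fun j =>
      maxCE <| SimpleGraph.fromRel fun u v =>
        u ∈ Wd n (dh - dAug g j) ∧ v ∈ Wd n (dh - dAug g j) ∧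
          ∃ w ∈ (gAug g j).support,
            wstar u ++ w ++ v ∈
              (⋃ j' : Fin (m + 1), gsuppP (gAug g j') (GseqCMax f g dh k j')) ∪
                Bsq (Wd n dh)

/-- The optimal value `λ_{d̂,k}^{ts}(f,S)` of the sparse moment relaxation `(EQ_{d̂,k}^{ts})`
associated to the family of graphs `GG`. -/
def eqTsValG {n m : ℕ} (f : NCPoly n) (g : Fin m → NCPoly n) (dh : ℕ)
    (GG : Fin (m + 1) → SimpleGraph (Word n)) : ℝ :=
  sInf {r | ∃ y : Word n → ℝ, r = Ly y f ∧ y [] = 1 ∧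
    ∀ j : Fin (m + 1),
      Completable (Wd n (dh - dAug g j)) (GG j)
        (locMat (Wd n (dh - dAug g j)) (gAug g j) y)}

/-- The optimal value `λ_{d̂}(f,S)` of the dense moment relaxation `(EQ_{d̂})`. -/
def eqDenseVal {n m : ℕ} (f : NCPoly n) (g : Fin m → NCPoly n) (dh : ℕ) : ℝ :=
  sInf {r | ∃ y : Word n → ℝ, r = Ly y f ∧ y [] = 1 ∧
    ∀ j : Fin (m + 1), (locMat (Wd n (dh - dAug g j)) (gAug g j) y).PosSemidef}

/-- The optimal value of the dual sparse SOHS relaxation `(EQ_{d̂,k}^{ts})*`. -/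
def eqTsDualValG {n m : ℕ} (f : NCPoly n) (g : Fin m → NCPoly n) (dh : ℕ)
    (GG : Fin (m + 1) → SimpleGraph (Word n)) : ℝ :=
  sSup {l | ∃ Q : ∀ j : Fin (m + 1),
      Matrix ↥(Wd n (dh - dAug g j)) ↥(Wd n (dh - dAug g j)) ℝ,
    (∀ j, (Q j).PosSemidef) ∧
    (∀ j, SparsityPattern (Wd n (dh - dAug g j)) (GG j) (Q j)) ∧
    ∀ w ∈ (⋃ j : Fin (m + 1), gsuppP (gAug g j) (GG j)) ∪ Bsq (Wd n dh),
      (∑ j : Fin (m + 1), pairingD (Wd n (dh - dAug g j)) (gAug g j) (Q j) w)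
        + (if w = ([] : Word n) then l else 0) = f w}

/-- The ball polynomial `R² − Σ_i X_i²`. -/
def ballPoly (n : ℕ) (R : ℝ) : NCPoly n :=
  Finsupp.single [] (R ^ 2) - ∑ i : Fin n, Finsupp.single [i, i] (1 : ℝ)

/-- A point of the operator semialgebraic set `D_S^∞`: a tuple of bounded self-adjoint
operators on a real Hilbert space making all `g_j(A)` positive semidefinite. -/
structure OpFeasPoint (n m : ℕ) (g : Fin m → NCPoly n) where
  H : Type
  [grp : NormedAddCommGroup H]
  [ip : InnerProductSpace ℝ H]
  [cpl : CompleteSpace H]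
  A : Fin n → H →L[ℝ] H
  selfAdj : ∀ i, IsSelfAdjoint (A i)
  posOp : ∀ (j : Fin m) (x : H), 0 ≤ (inner ℝ ((evalNC (g j) A) x) x : ℝ)

/-- Feasibility of the semialgebraic set `D_S` (on tuples of symmetric matrices). -/
def MatFeasible {n m : ℕ} (g : Fin m → NCPoly n) : Prop :=
  ∃ (r : ℕ) (A : Fin n → Matrix (Fin (r + 1)) (Fin (r + 1)) ℝ),
    (∀ i, (A i).IsSymm) ∧ ∀ j, (evalNC (g j) A).PosSemidef

/-! ### Combined correlative-term sparsity (eigenvalue optimization) -/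

/-- Words of degree ≤ d in the variables `X(I_l)`. -/
def WdL (n d : ℕ) (Il : Finset (Fin n)) : Finset (Word n) :=
  (Wd n d).filter fun w => ∀ i ∈ w, i ∈ Il

/-- Index set for the blocks of the combined correlative-term sparsity relaxations:
`Sum.inl l` indexes the moment block of the clique `I_l` (i.e. `j = 0`), and `Sum.inr j`
indexes the localizing block of the constraint `g_j` (belonging to the clique `I_{l(j)}`). -/
abbrev CIdx (p m : ℕ) := Fin p ⊕ Fin m

/-- The node set (monomial basis) of each block. -/
def csNode {n m p : ℕ} (g : Fin m → NCPoly n) (I : Fin p → Finset (Fin n))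
    (asg : Fin m → Fin p) (dh : ℕ) : CIdx p m → Finset (Word n)
  | .inl l => WdL n dh (I l)
  | .inr j => WdL n (dh - ceilHalf (ncDeg (g j))) (I (asg j))

/-- The polynomial attached to each block (`1` for moment blocks, `g_j` for localizing
blocks). -/
def csPoly {n m p : ℕ} (g : Fin m → NCPoly n) : CIdx p m → NCPoly n
  | .inl _ => ncOne
  | .inr j => g j

/-- `A_l = {w ∈ A : var(w) ⊆ X(I_l)}`. -/
def AsuppL {n m : ℕ} (f : NCPoly n) (g : Fin m → NCPoly n) (Il : Finset (Fin n)) :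
    Set (Word n) := {w | w ∈ Asupp f g ∧ ∀ i ∈ w, i ∈ Il}

/-- The per-clique tsp graph `G_{d̂,l}^{tsp}` with nodes `W_{d̂,l}` associated with `A_l`. -/
def tspCS {n m p : ℕ} (f : NCPoly n) (g : Fin m → NCPoly n) (I : Fin p → Finset (Fin n))
    (dh : ℕ) (l : Fin p) : SimpleGraph (Word n) :=
  SimpleGraph.fromRel fun u v =>
    u ∈ WdL n dh (I l) ∧ v ∈ WdL n dh (I l) ∧
      wstar u ++ v ∈ AsuppL f g (I l) ∪ Bsq (WdL n dh (I l))

/-- The combined correlative-term sparsity graph sequence `(G_{d̂,l,j}^{(k)})`. -/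
def GseqCS {n m p : ℕ} (E : ChordalExt n) (f : NCPoly n) (g : Fin m → NCPoly n)
    (I : Fin p → Finset (Fin n)) (asg : Fin m → Fin p) (dh : ℕ) :
    ℕ → CIdx p m → SimpleGraph (Word n)
  | 0 => Sum.elim (fun l => tspCS f g I dh l) (fun _ => (⊥ : SimpleGraph (Word n)))
  | k + 1 => fun t =>
      E.ce (csNode g I asg dh t) <| SimpleGraph.fromRel fun u v =>
        u ∈ csNode g I asg dh t ∧ v ∈ csNode g I asg dh t ∧
          ∃ w ∈ (csPoly g t).support,
            wstar u ++ w ++ v ∈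
              (⋃ t' : CIdx p m, gsuppP (csPoly g t') (GseqCS E f g I asg dh k t')) ∪
                Bsq (Wd n dh)

/-- The same sequence built with the maximal chordal extension. -/
def GseqCSMax {n m p : ℕ} (f : NCPoly n) (g : Fin m → NCPoly n)
    (I : Fin p → Finset (Fin n)) (asg : Fin m → Fin p) (dh : ℕ) :
    ℕ → CIdx p m → SimpleGraph (Word n)
  | 0 => Sum.elim (fun l => tspCS f g I dh l) (fun _ => (⊥ : SimpleGraph (Word n)))
  | k + 1 => fun t =>
      maxCE <| SimpleGraph.fromRel fun u v =>
        u ∈ csNode g I asg dh t ∧ v ∈ csNode g I asg dh t ∧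
          ∃ w ∈ (csPoly g t).support,
            wstar u ++ w ++ v ∈
              (⋃ t' : CIdx p m, gsuppP (csPoly g t') (GseqCSMax f g I asg dh k t')) ∪
                Bsq (Wd n dh)

/-- The optimal value `λ_{d̂,k}^{cs-ts}(f,S)` of `(EQ_{d̂,k}^{cs-ts})` associated to the family
of graphs `GG`. -/
def csTsValG {n m p : ℕ} (f : NCPoly n) (g : Fin m → NCPoly n) (I : Fin p → Finset (Fin n))
    (asg : Fin m → Fin p) (dh : ℕ) (GG : CIdx p m → SimpleGraph (Word n)) : ℝ :=
  sInf {r | ∃ y : Word n → ℝ, r = Ly y f ∧ y [] = 1 ∧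
    ∀ t : CIdx p m,
      Completable (csNode g I asg dh t) (GG t) (locMat (csNode g I asg dh t) (csPoly g t) y)}

/-- The optimal value `λ_{d̂}^{cs}(f,S)` of the correlative-sparsity relaxation `(EQ_{d̂}^{cs})`. -/
def csVal {n m p : ℕ} (f : NCPoly n) (g : Fin m → NCPoly n) (I : Fin p → Finset (Fin n))
    (asg : Fin m → Fin p) (dh : ℕ) : ℝ :=
  sInf {r | ∃ y : Word n → ℝ, r = Ly y f ∧ y [] = 1 ∧
    ∀ t : CIdx p m, (locMat (csNode g I asg dh t) (csPoly g t) y).PosSemidef}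

/-! ### Trace optimization: cyclic equivalence -/

/-- Two words are cyclically equivalent iff one is a cyclic rotation of the other. -/
def cycEq {n : ℕ} (u v : Word n) : Prop := ∃ k, u = v.rotate k

/-- The (finite) cyclic equivalence class of a word. -/
def rotClass {n : ℕ} (v : Word n) : Finset (Word n) :=
  (Finset.range (v.length + 1)).image fun k => v.rotate k

/-- The cyclic degree `cdeg(f) = deg([f])` of an nc polynomial. -/
def ncCdeg {n : ℕ} (f : NCPoly n) : ℕ :=
  (f.support.filter fun w => (∑ w' ∈ rotClass w, f w') ≠ 0).sup List.length

/-- `d = max{⌈cdeg f/2⌉, d_1, …, d_m}`: the minimal relaxation order for trace optimization. -/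
def minOrderT {n m : ℕ} (f : NCPoly n) (g : Fin m → NCPoly n) : ℕ :=
  max (ceilHalf (ncCdeg f)) (Finset.univ.sup fun j : Fin m => ceilHalf (ncDeg (g j)))

/-- The cyclic tsp graph `H_d̂^tsp`: nodes `W_d̂`, and `u ≠ v` joined whenever
`[u⋆v] ∈ [A ∪ W_d̂²]`. -/
def tspT {n m : ℕ} (f : NCPoly n) (g : Fin m → NCPoly n) (dh : ℕ) : SimpleGraph (Word n) :=
  SimpleGraph.fromRel fun u v =>
    u ∈ Wd n dh ∧ v ∈ Wd n dh ∧
      ∃ s ∈ Asupp f g ∪ Bsq (Wd n dh), cycEq (wstar u ++ v) s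

/-- The cyclic term-sparsity graph sequence `(H_{d̂,j}^{(k)})`: alternate cyclic support
extension and chordal extension. -/
def GseqT {n m : ℕ} (E : ChordalExt n) (f : NCPoly n) (g : Fin m → NCPoly n) (dh : ℕ) :
    ℕ → Fin (m + 1) → SimpleGraph (Word n)
  | 0 => Fin.cases (tspT f g dh) fun _ => (⊥ : SimpleGraph (Word n))
  | k + 1 => fun j =>
      E.ce (Wd n (dh - dAug g j)) <| SimpleGraph.fromRel fun u v =>
        u ∈ Wd n (dh - dAug g j) ∧ v ∈ Wd n (dh - dAug g j) ∧
          ∃ w ∈ (gAug g j).support,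
            ∃ s ∈ (⋃ j' : Fin (m + 1), gsuppP (gAug g j') (GseqT E f g dh k j')) ∪
                Bsq (Wd n dh),
              cycEq (wstar u ++ w ++ v) s

/-- The same sequence built with the maximal chordal extension. -/
def GseqTMax {n m : ℕ} (f : NCPoly n) (g : Fin m → NCPoly n) (dh : ℕ) :
    ℕ → Fin (m + 1) → SimpleGraph (Word n)
  | 0 => Fin.cases (tspT f g dh) fun _ => (⊥ : SimpleGraph (Word n))
  | k + 1 => fun j =>
      maxCE <| SimpleGraph.fromRel fun u v =>
        u ∈ Wd n (dh - dAug g j) ∧ v ∈ Wd n (dh - dAug g j) ∧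
          ∃ w ∈ (gAug g j).support,
            ∃ s ∈ (⋃ j' : Fin (m + 1), gsuppP (gAug g j') (GseqTMax f g dh k j')) ∪
                Bsq (Wd n dh),
              cycEq (wstar u ++ w ++ v) s

/-- The entry of the Hadamard product `B_H ∘ M(y)` at `(u,v)`. -/
def hadEntry {n : ℕ} (H : SimpleGraph (Word n)) (y : Word n → ℝ) (u v : Word n) : ℝ :=
  if u = v ∨ H.Adj u v then y (wstar u ++ v) else 0

/-- The tracial constraint `[B_H ∘ M(y)]_{uv} = [B_H ∘ M(y)]_{wz}` for all `u⋆v ∼cyc w⋆z`,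
on the node set `W`. -/
def CycConstraint {n : ℕ} (W : Finset (Word n)) (H : SimpleGraph (Word n))
    (y : Word n → ℝ) : Prop :=
  ∀ u v w z : Word n, u ∈ W → v ∈ W → w ∈ W → z ∈ W →
    cycEq (wstar u ++ v) (wstar w ++ z) → hadEntry H y u v = hadEntry H y w z

/-- The optimal value `μ_{d̂,k}^{ts}(f,S)` of the sparse tracial moment relaxation
`(TQ_{d̂,k}^{ts})` associated to the family of graphs `GG`. -/
def tqTsValG {n m : ℕ} (f : NCPoly n) (g : Fin m → NCPoly n) (dh : ℕ)
    (GG : Fin (m + 1) → SimpleGraph (Word n)) : ℝ :=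
  sInf {r | ∃ y : Word n → ℝ, r = Ly y f ∧ y [] = 1 ∧
    (∀ j : Fin (m + 1),
      Completable (Wd n (dh - dAug g j)) (GG j)
        (locMat (Wd n (dh - dAug g j)) (gAug g j) y)) ∧
    CycConstraint (Wd n dh) (GG 0) y}

/-- The optimal value `μ_{d̂}(f,S)` of the dense tracial moment relaxation `(TQ_{d̂})`. -/
def tqDenseVal {n m : ℕ} (f : NCPoly n) (g : Fin m → NCPoly n) (dh : ℕ) : ℝ :=
  sInf {r | ∃ y : Word n → ℝ, r = Ly y f ∧ y [] = 1 ∧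
    (∀ j : Fin (m + 1), (locMat (Wd n (dh - dAug g j)) (gAug g j) y).PosSemidef) ∧
    ∀ u v w z : Word n, u ∈ Wd n dh → v ∈ Wd n dh → w ∈ Wd n dh → z ∈ Wd n dh →
      cycEq (wstar u ++ v) (wstar w ++ z) → y (wstar u ++ v) = y (wstar w ++ z)}

/-- The optimal value of the dual sparse tracial SOHS relaxation `(TQ_{d̂,k}^{ts})*`. -/
def tqTsDualValG {n m : ℕ} (f : NCPoly n) (g : Fin m → NCPoly n) (dh : ℕ)
    (GG : Fin (m + 1) → SimpleGraph (Word n)) : ℝ :=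
  sSup {l | ∃ Q : ∀ j : Fin (m + 1),
      Matrix ↥(Wd n (dh - dAug g j)) ↥(Wd n (dh - dAug g j)) ℝ,
    (∀ j, (Q j).PosSemidef) ∧
    (∀ j, SparsityPattern (Wd n (dh - dAug g j)) (GG j) (Q j)) ∧
    ∀ v : Word n,
      (∃ s ∈ (⋃ j : Fin (m + 1), gsuppP (gAug g j) (GG j)) ∪ Bsq (Wd n dh), cycEq v s) →
        (∑ w ∈ rotClass v,
          ((∑ j : Fin (m + 1), pairingD (Wd n (dh - dAug g j)) (gAug g j) (Q j) w)
            + (if w = ([] : Word n) then l else 0)))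
          = ∑ w ∈ rotClass v, f w}

/-! ### Combined correlative-term sparsity (trace optimization) -/

/-- The per-clique cyclic tsp graph `H_{d̂,l}^{tsp}`. -/
def tspTCS {n m p : ℕ} (f : NCPoly n) (g : Fin m → NCPoly n) (I : Fin p → Finset (Fin n))
    (dh : ℕ) (l : Fin p) : SimpleGraph (Word n) :=
  SimpleGraph.fromRel fun u v =>
    u ∈ WdL n dh (I l) ∧ v ∈ WdL n dh (I l) ∧
      ∃ s ∈ AsuppL f g (I l) ∪ Bsq (WdL n dh (I l)), cycEq (wstar u ++ v) s

/-- The combined correlative-term sparsity cyclic graph sequence `(H_{d̂,l,j}^{(k)})`. -/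
def GseqTCS {n m p : ℕ} (E : ChordalExt n) (f : NCPoly n) (g : Fin m → NCPoly n)
    (I : Fin p → Finset (Fin n)) (asg : Fin m → Fin p) (dh : ℕ) :
    ℕ → CIdx p m → SimpleGraph (Word n)
  | 0 => Sum.elim (fun l => tspTCS f g I dh l) (fun _ => (⊥ : SimpleGraph (Word n)))
  | k + 1 => fun t =>
      E.ce (csNode g I asg dh t) <| SimpleGraph.fromRel fun u v =>
        u ∈ csNode g I asg dh t ∧ v ∈ csNode g I asg dh t ∧
          ∃ w ∈ (csPoly g t).support,
            ∃ s ∈ (⋃ t' : CIdx p m, gsuppP (csPoly g t') (GseqTCS E f g I asg dh k t')) ∪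
                Bsq (Wd n dh),
              cycEq (wstar u ++ w ++ v) s

/-- The same sequence built with the maximal chordal extension. -/
def GseqTCSMax {n m p : ℕ} (f : NCPoly n) (g : Fin m → NCPoly n)
    (I : Fin p → Finset (Fin n)) (asg : Fin m → Fin p) (dh : ℕ) :
    ℕ → CIdx p m → SimpleGraph (Word n)
  | 0 => Sum.elim (fun l => tspTCS f g I dh l) (fun _ => (⊥ : SimpleGraph (Word n)))
  | k + 1 => fun t =>
      maxCE <| SimpleGraph.fromRel fun u v =>
        u ∈ csNode g I asg dh t ∧ v ∈ csNode g I asg dh t ∧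
          ∃ w ∈ (csPoly g t).support,
            ∃ s ∈ (⋃ t' : CIdx p m, gsuppP (csPoly g t') (GseqTCSMax f g I asg dh k t')) ∪
                Bsq (Wd n dh),
              cycEq (wstar u ++ w ++ v) s

/-- The optimal value `μ_{d̂,k}^{cs-ts}(f,S)` of `(TQ_{d̂,k}^{cs-ts})` associated to the family
of graphs `GG`. -/
def tqCsTsValG {n m p : ℕ} (f : NCPoly n) (g : Fin m → NCPoly n)
    (I : Fin p → Finset (Fin n)) (asg : Fin m → Fin p) (dh : ℕ)
    (GG : CIdx p m → SimpleGraph (Word n)) : ℝ :=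
  sInf {r | ∃ y : Word n → ℝ, r = Ly y f ∧ y [] = 1 ∧
    (∀ t : CIdx p m,
      Completable (csNode g I asg dh t) (GG t)
        (locMat (csNode g I asg dh t) (csPoly g t) y)) ∧
    ∀ l : Fin p, CycConstraint (WdL n dh (I l)) (GG (Sum.inl l)) y}

/-- The optimal value `μ_{d̂}^{cs}(f,S)` of the correlative-sparsity tracial relaxation. -/
def tqCsVal {n m p : ℕ} (f : NCPoly n) (g : Fin m → NCPoly n) (I : Fin p → Finset (Fin n))
    (asg : Fin m → Fin p) (dh : ℕ) : ℝ :=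
  sInf {r | ∃ y : Word n → ℝ, r = Ly y f ∧ y [] = 1 ∧
    (∀ t : CIdx p m, (locMat (csNode g I asg dh t) (csPoly g t) y).PosSemidef) ∧
    ∀ l : Fin p, ∀ u v w z : Word n, u ∈ WdL n dh (I l) → v ∈ WdL n dh (I l) →
      w ∈ WdL n dh (I l) → z ∈ WdL n dh (I l) →
        cycEq (wstar u ++ v) (wstar w ++ z) → y (wstar u ++ v) = y (wstar w ++ z)}

/-- `supp(G) ∪ W²` as a finite word set, for a graph `G` with nodes in `W`. -/
def suppUnionSq {n : ℕ} (W : Finset (Word n)) (G : SimpleGraph (Word n)) :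
    Finset (Word n) :=
  ((W ×ˢ W).filter fun p => G.Adj p.1 p.2 ∨ p.1 = p.2).image fun p => wstar p.1 ++ p.2

/-!
Since `u⋆ g₁ u = R² u⋆u − Σᵢ (Xᵢu)⋆(Xᵢu)`, the trace of `M_{t−1}(g₁ y)` telescopes
into `R² Tr M_{t−1}(y) + y₁ − Tr M_t(y)`; its nonnegativity gives a linear recursion
whose solution is the geometric sum `Σ R^{2t}`. For the sparse bound, take a positive
semidefinite completion `P`: its entries satisfy `P_{uv}² ≤ P_{uu} P_{vv}`, so the sum of
squares of the specified entries is at most `(Tr P)² = (Tr M_{d̂}(y))²`.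
-/

section Words

variable {n : ℕ} {M : Type*} [AddCommMonoid M]

lemma mem_wordsLen {k : ℕ} {w : Word n} : w ∈ wordsLen n k ↔ w.length = k := by
  induction k generalizing w with
  | zero => simp [wordsLen, List.length_eq_zero_iff]
  | succ k ih =>
    simp only [wordsLen, Finset.mem_image, Finset.mem_product, Finset.mem_univ, true_and]
    constructor
    · rintro ⟨⟨i, v⟩, hv, rfl⟩
      simp [ih.mp hv]
    · rcases w with _ | ⟨i, v⟩
      · simp
      · exact fun hw => ⟨⟨i, v⟩, ih.mpr (by simpa using hw), rfl⟩

lemma disjoint_wordsLen {k l : ℕ} (hkl : k ≠ l) : Disjoint (wordsLen n k) (wordsLen n l) :=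
  Finset.disjoint_left.mpr fun _ hk hl =>
    hkl ((mem_wordsLen.mp hk).symm.trans (mem_wordsLen.mp hl))

lemma sum_Wd (d : ℕ) (F : Word n → M) :
    ∑ u ∈ Wd n d, F u = ∑ k ∈ Finset.range (d + 1), ∑ u ∈ wordsLen n k, F u :=
  Finset.sum_biUnion fun _ _ _ _ hkl => disjoint_wordsLen hkl

lemma sum_wordsLen_succ (k : ℕ) (F : Word n → M) :
    ∑ u ∈ wordsLen n (k + 1), F u = ∑ v ∈ wordsLen n k, ∑ i : Fin n, F (i :: v) := by
  rw [wordsLen, Finset.sum_image (by rintro ⟨i, v⟩ _ ⟨j, w⟩ _ h; simpa using h),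
    Finset.sum_product, Finset.sum_comm]

lemma sum_Wd_succ (d : ℕ) (F : Word n → M) :
    ∑ u ∈ Wd n (d + 1), F u = F [] + ∑ v ∈ Wd n d, ∑ i : Fin n, F (i :: v) := by
  simp only [sum_Wd, Finset.sum_range_succ' _ (d + 1), sum_wordsLen_succ]
  simp [wordsLen, add_comm]

lemma Wd_zero : Wd n 0 = {[]} := by
  simp [Wd, wordsLen]

end Words

section Moments

variable {n : ℕ}

lemma trace_momMat (B : Finset (Word n)) (y : Word n → ℝ) :
    (momMat B y).trace = ∑ u ∈ B, y (wstar u ++ u) :=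
  Finset.sum_coe_sort B fun u => y (wstar u ++ u)

lemma trace_momMat_Wd_zero (y : Word n → ℝ) : (momMat (Wd n 0) y).trace = y [] := by
  simp [trace_momMat, Wd_zero, wstar]

lemma sum_ballPoly (R : ℝ) (c : Word n → ℝ) :
    ((ballPoly n R).sum fun w a => a * c w) = R ^ 2 * c [] - ∑ i : Fin n, c [i, i] := by
  have h := Finsupp.linearCombination_apply ℝ (v := c) (ballPoly n R)
  simp only [smul_eq_mul] at h
  rw [← h, ballPoly, map_sub, map_sum, Finsupp.linearCombination_single]
  simp [smul_eq_mul]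

lemma trace_locMat_ballPoly (d : ℕ) (R : ℝ) (y : Word n → ℝ) :
    (locMat (Wd n d) (ballPoly n R) y).trace
      = R ^ 2 * (momMat (Wd n d) y).trace + y [] - (momMat (Wd n (d + 1)) y).trace := by
  have hloc : (locMat (Wd n d) (ballPoly n R) y).trace
      = ∑ u ∈ Wd n d,
          (R ^ 2 * y (wstar u ++ u) - ∑ i : Fin n, y (wstar (i :: u) ++ i :: u)) := by
    rw [← Finset.sum_coe_sort (Wd n d)]
    refine Finset.sum_congr rfl fun u _ => ?_
    simp [locMat, sum_ballPoly, wstar]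
  rw [hloc, trace_momMat, trace_momMat, sum_Wd_succ, Finset.sum_sub_distrib, ← Finset.mul_sum]
  simp [wstar]
  ring

end Moments

lemma le_geom_sum_of_le_mul_add_one {a : ℕ → ℝ} {q : ℝ} (hq : 0 ≤ q) {d : ℕ}
    (h0 : a 0 ≤ 1) (hstep : ∀ t < d, a (t + 1) ≤ q * a t + 1) :
    a d ≤ ∑ t ∈ Finset.range (d + 1), q ^ t := by
  induction d with
  | zero => simpa using h0
  | succ d ih =>
    calc a (d + 1) ≤ q * a d + 1 := hstep d d.lt_succ_self
      _ ≤ q * ∑ t ∈ Finset.range (d + 1), q ^ t + 1 := by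
        gcongr
        exact ih fun t ht => hstep t (by omega)
      _ = ∑ t ∈ Finset.range (d + 2), q ^ t := geom_sum_succ.symm

namespace Matrix.PosSemidef

variable {N : Type*} {P : Matrix N N ℝ}

/-- The `2 × 2` principal submatrix on `u, v` has nonnegative determinant. -/
lemma sq_apply_le_mul (hP : P.PosSemidef) (u v : N) : P u v ^ 2 ≤ P u u * P v v := by
  have hdet := (hP.submatrix ![u, v]).det_nonneg
  have hsymm : P v u = P u v := hP.isHermitian.apply u v
  rw [Matrix.det_fin_two] at hdet
  simp only [submatrix_apply, Matrix.cons_val_zero, Matrix.cons_val_one, hsymm] at hdet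
  linarith

lemma sum_sq_apply_le_sq_trace [Fintype N] (hP : P.PosSemidef) :
    ∑ u, ∑ v, P u v ^ 2 ≤ P.trace ^ 2 :=
  calc ∑ u, ∑ v, P u v ^ 2 ≤ ∑ u, ∑ v, P u u * P v v :=
        Finset.sum_le_sum fun u _ => Finset.sum_le_sum fun v _ => hP.sq_apply_le_mul u v
    _ = P.trace ^ 2 := by rw [sq, Matrix.trace, Finset.sum_mul_sum]; rfl

end Matrix.PosSemidef

namespace Completable

variable {n : ℕ} {B : Finset (Word n)} {G : SimpleGraph (Word n)} {M : Matrix B B ℝ}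

lemma exists_posSemidef_trace_eq (hC : Completable B G M) :
    ∃ P : Matrix B B ℝ, P.PosSemidef ∧ P.trace = M.trace ∧
      ∀ u v : B, (u = v ∨ G.Adj u.1 v.1) → P u v = M u v := by
  obtain ⟨P, hP, hPM⟩ := hC
  exact ⟨P, hP, Finset.sum_congr rfl fun u _ => hPM u u (Or.inl rfl), hPM⟩

lemma trace_nonneg (hC : Completable B G M) : 0 ≤ M.trace := by
  obtain ⟨P, hP, htr, -⟩ := hC.exists_posSemidef_trace_eq
  exact htr ▸ hP.trace_nonneg

lemma sum_sq_le_sq_trace (hC : Completable B G M) :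
    ∑ u, ∑ v, (if u = v ∨ G.Adj u.1 v.1 then M u v ^ 2 else 0) ≤ M.trace ^ 2 := by
  obtain ⟨P, hP, htr, hPM⟩ := hC.exists_posSemidef_trace_eq
  calc ∑ u, ∑ v, (if u = v ∨ G.Adj u.1 v.1 then M u v ^ 2 else 0)
      ≤ ∑ u, ∑ v, P u v ^ 2 := by
        refine Finset.sum_le_sum fun u _ => Finset.sum_le_sum fun v _ => ?_
        split_ifs with h
        · rw [hPM u v h]
        · exact sq_nonneg _
    _ ≤ M.trace ^ 2 := htr ▸ hP.sum_sq_apply_le_sq_trace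

end Completable

lemma sum_sq_suppUnionSq_le_sq_trace {n : ℕ} {W : Finset (Word n)} {G : SimpleGraph (Word n)}
    {y : Word n → ℝ} (hC : Completable W G (momMat W y)) :
    ∑ w ∈ suppUnionSq W G, y w ^ 2 ≤ (momMat W y).trace ^ 2 :=
  calc ∑ w ∈ suppUnionSq W G, y w ^ 2
      ≤ ∑ p ∈ (W ×ˢ W).filter (fun p => G.Adj p.1 p.2 ∨ p.1 = p.2),
          y (wstar p.1 ++ p.2) ^ 2 :=
        Finset.sum_image_le_of_nonneg fun _ _ => sq_nonneg _
    _ = ∑ u : W, ∑ v : W, (if u = v ∨ G.Adj u.1 v.1 then momMat W y u v ^ 2 else 0) := by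
        rw [Finset.sum_filter, Finset.sum_product, ← Finset.sum_coe_sort W]
        refine Finset.sum_congr rfl fun u _ => ?_
        rw [← Finset.sum_coe_sort W]
        simp only [Subtype.ext_iff, or_comm, momMat]
    _ ≤ (momMat W y).trace ^ 2 := hC.sum_sq_le_sq_trace

theorem stmt18_general {n dh : ℕ} (R : ℝ) (y : Word n → ℝ) (hy1 : y [] = 1)
    (hpsd : ∀ t : ℕ, 1 ≤ t → t ≤ dh →
      (locMat (Wd n (t - 1)) (ballPoly n R) y).PosSemidef) :
    (∀ t : ℕ, 1 ≤ t → t ≤ dh →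
      Matrix.trace (locMat (Wd n (t - 1)) (ballPoly n R) y)
        = R ^ 2 * Matrix.trace (momMat (Wd n (t - 1)) y) + 1
          - Matrix.trace (momMat (Wd n t) y)) ∧
    (∀ t : ℕ, 1 ≤ t → t ≤ dh →
      Matrix.trace (momMat (Wd n t) y)
        ≤ R ^ 2 * Matrix.trace (momMat (Wd n (t - 1)) y) + 1) ∧
    Matrix.trace (momMat (Wd n dh) y) ≤ (∑ t ∈ Finset.range (dh + 1), R ^ (2 * t)) ∧
    (∀ G : SimpleGraph (Word n), EdgesIn (Wd n dh) G →
      Completable (Wd n dh) G (momMat (Wd n dh) y) →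
        Real.sqrt (∑ w ∈ suppUnionSq (Wd n dh) G, (y w) ^ 2)
            ≤ Matrix.trace (momMat (Wd n dh) y) ∧
          Matrix.trace (momMat (Wd n dh) y) ≤ ∑ t ∈ Finset.range (dh + 1), R ^ (2 * t)) := by
  have trace_eq : ∀ t : ℕ, 1 ≤ t → t ≤ dh →
      (locMat (Wd n (t - 1)) (ballPoly n R) y).trace
        = R ^ 2 * (momMat (Wd n (t - 1)) y).trace + 1 - (momMat (Wd n t) y).trace := by
    rintro t ht -
    obtain ⟨s, rfl⟩ := Nat.exists_eq_add_of_le' ht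
    simpa [hy1] using trace_locMat_ballPoly s R y
  have trace_le : ∀ t : ℕ, 1 ≤ t → t ≤ dh →
      (momMat (Wd n t) y).trace ≤ R ^ 2 * (momMat (Wd n (t - 1)) y).trace + 1 :=
    fun t ht htd => by linarith [trace_eq t ht htd, (hpsd t ht htd).trace_nonneg]
  have trace_le_sum :
      (momMat (Wd n dh) y).trace ≤ ∑ t ∈ Finset.range (dh + 1), R ^ (2 * t) := by
    simp only [pow_mul]
    refine le_geom_sum_of_le_mul_add_one (a := fun t => (momMat (Wd n t) y).trace)
      (sq_nonneg R) ?_ fun t ht => ?_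
    · rw [trace_momMat_Wd_zero, hy1]
    · simpa using trace_le (t + 1) (by omega) (by omega)
  refine ⟨trace_eq, trace_le, trace_le_sum, fun G _ hC => ⟨?_, trace_le_sum⟩⟩
  exact Real.sqrt_le_iff.mpr ⟨hC.trace_nonneg, sum_sq_suppUnionSq_le_sq_trace hC⟩

/-- the key trace estimates in the proof of the absence of a duality gap in
presence of the ball constraint `g_1 = R² − Σ_i X_i²`. -/
theorem stmt18 {n dh : ℕ} (R : ℝ) (hR : 0 < R) (y : Word n → ℝ) (hy1 : y [] = 1)
    (hpsd : ∀ t : ℕ, 1 ≤ t → t ≤ dh →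
      (locMat (Wd n (t - 1)) (ballPoly n R) y).PosSemidef) :
    (∀ t : ℕ, 1 ≤ t → t ≤ dh →
      Matrix.trace (locMat (Wd n (t - 1)) (ballPoly n R) y)
        = R ^ 2 * Matrix.trace (momMat (Wd n (t - 1)) y) + 1
          - Matrix.trace (momMat (Wd n t) y)) ∧
    (∀ t : ℕ, 1 ≤ t → t ≤ dh →
      Matrix.trace (momMat (Wd n t) y)
        ≤ R ^ 2 * Matrix.trace (momMat (Wd n (t - 1)) y) + 1) ∧
    Matrix.trace (momMat (Wd n dh) y) ≤ (∑ t ∈ Finset.range (dh + 1), R ^ (2 * t)) ∧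
    (∀ G : SimpleGraph (Word n), EdgesIn (Wd n dh) G →
      Completable (Wd n dh) G (momMat (Wd n dh) y) →
        Real.sqrt (∑ w ∈ suppUnionSq (Wd n dh) G, (y w) ^ 2)
            ≤ Matrix.trace (momMat (Wd n dh) y) ∧
          Matrix.trace (momMat (Wd n dh) y) ≤ ∑ t ∈ Finset.range (dh + 1), R ^ (2 * t)) :=
  stmt18_general R y hy1 hpsd
end
end

section
/- Let f ∈ Sym ℝ⟨X⟩ and S = {g_1,…,g_m} ⊆ Sym ℝ⟨X⟩, and suppose all chordal extensions are chosen so that G ⊆ H implies Ḡ ⊆ H̄. Then for every sparse order k ≥ 1, every relaxation order d̂ ≥ d and every j ∈ {0}∪[m], the term-sparsity graph at order d̂ embeds into the one at order d̂+1: G_{d̂,j}^{(k)} ⊆ G_{d̂+1,j}^{(k)} (i.e., every edge of G_{d̂,j}^{(k)} on node set W_{d̂−d_j} is an edge of G_{d̂+1,j}^{(k)} on node set W_{d̂+1−d_j}). -/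
open scoped Classical BigOperators RealInnerProductSpace

noncomputable section

lemma Wd_mono {n : ℕ} : Monotone (Wd n) := fun _ _ h _ hw => by
  simp only [Wd, Finset.mem_biUnion, Finset.mem_range] at hw ⊢
  obtain ⟨i, hi, hwi⟩ := hw
  exact ⟨i, by omega, hwi⟩

lemma Bsq_mono {n : ℕ} : Monotone (Bsq (n := n)) :=
  fun _ _ h _ ⟨u, hu, hw⟩ => ⟨u, h hu, hw⟩

lemma gsuppP_mono {n : ℕ} (g : NCPoly n) : Monotone (gsuppP g) :=
  fun _ _ hGH _ ⟨u, v, w, huv, hw, hs⟩ => ⟨u, v, w, hGH huv, hw, hs⟩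

lemma SimpleGraph.fromRel_mono {V : Type*} {r s : V → V → Prop} (h : ∀ u v, r u v → s u v) :
    SimpleGraph.fromRel r ≤ SimpleGraph.fromRel s :=
  fun u v huv => ⟨huv.1, huv.2.imp (h u v) (h v u)⟩

lemma tspC_mono {n m : ℕ} (f : NCPoly n) (g : Fin m → NCPoly n) : Monotone (tspC f g) :=
  fun _ _ h => SimpleGraph.fromRel_mono fun _ _ ⟨hu, hv, hs⟩ =>
    ⟨Wd_mono h hu, Wd_mono h hv, hs.imp id (Bsq_mono (Wd_mono h) ·)⟩

lemma GseqC_mono_order {n m : ℕ} (E : ChordalExt n) (f : NCPoly n) (g : Fin m → NCPoly n)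
    {dh dh' : ℕ} (h : dh ≤ dh') (k : ℕ) (j : Fin (m + 1)) :
    GseqC E f g dh k j ≤ GseqC E f g dh' k j := by
  induction k generalizing j with
  | zero =>
    cases j using Fin.cases with
    | zero => exact tspC_mono f g h
    | succ _ => exact bot_le
  | succ k ih =>
    have hnodes : Wd n (dh - dAug g j) ⊆ Wd n (dh' - dAug g j) := Wd_mono (Nat.sub_le_sub_right h _)
    refine E.mono _ _ _ _ hnodes (SimpleGraph.fromRel_mono ?_)
    rintro u v ⟨hu, hv, w, hw, hs⟩
    refine ⟨hnodes hu, hnodes hv, w, hw, hs.imp (fun hL => ?_) (Bsq_mono (Wd_mono h) ·)⟩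
    obtain ⟨j', hj'⟩ := Set.mem_iUnion.mp hL
    exact Set.mem_iUnion.mpr ⟨j', gsuppP_mono _ (ih j') hj'⟩

theorem stmt19_general {n m : ℕ} (f : NCPoly n) (g : Fin m → NCPoly n)
    (E : ChordalExt n) (dh k : ℕ) :
    ∀ j : Fin (m + 1), GseqC E f g dh k j ≤ GseqC E f g (dh + 1) k j :=
  GseqC_mono_order E f g dh.le_succ k

/-- the term-sparsity graphs embed when the relaxation order increases:
`G_{d̂,j}^{(k)} ⊆ G_{d̂+1,j}^{(k)}`. -/
theorem stmt19 {n m : ℕ} (f : NCPoly n) (g : Fin m → NCPoly n)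
    (hsym : IsSymNC f) (hgsym : ∀ j, IsSymNC (g j))
    (E : ChordalExt n) (dh k : ℕ) (hdh : minOrder f g ≤ dh) (hk : 1 ≤ k) :
    ∀ j : Fin (m + 1), GseqC E f g dh k j ≤ GseqC E f g (dh + 1) k j :=
  stmt19_general f g E dh k
end
end
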